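/- arXiv:2102.00504 — 7 statements merged into one kernel-verified Lean document; each statement's English description precedes it below -/
import Mathlib

section
/- Let C be a cluster in a graph G satisfying geodesic convexity with margin γ: any simple path in G between two vertices of C of length at most (1+γ) times their graph distance lies entirely in C. Let R with C ⊆ R ⊆ V(G) be such that every shortest path in G between two vertices of C lies inside C (hence inside G[R]). Then in G[R], any shortest path from a vertex s ∈ C to a vertex t ∈ R \ C is C-prefixed: there is an index j* such that the first j* vertices of the path are exactly its vertices in C. -/
/-!
Let `x` be the vertex of `p` at position `j`, lying in `C`. Since `p` is a geodesic of `G[R]`,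
so is its prefix `p.take j`. The `G`-geodesic from `s` to `x` lies in `C ⊆ R`, hence is also a
walk of `G[R]`, so the prefix is no longer than it: the prefix is a `G`-geodesic between two
vertices of `C` and therefore lies in `C`. The positions of `p` in `C` thus form a lower set
of `ℕ`, i.e. an initial segment `Iio jstar`.
-/

namespace SimpleGraph

variable {V : Type*} {G : SimpleGraph V}

theorem Walk.length_take_eq_dist {u v : V} (p : G.Walk u v) (hp : p.length = G.dist u v)
    (n : ℕ) : (p.take n).length = G.dist u (p.getVert n) := by
  obtain ⟨w, hw⟩ := (p.take n).reachable.exists_walk_length_eq_dist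
  have hsplit : (p.take n).length + (p.drop n).length = p.length := by
    rw [← Walk.length_append, Walk.append_take_drop_eq]
  have hdetour := dist_le (w.append (p.drop n))
  rw [Walk.length_append] at hdetour
  have := dist_le (p.take n)
  omega

theorem dist_induce_le_length {s : Set V} {u v : V} (w : G.Walk u v)
    (hw : ∀ x ∈ w.support, x ∈ s) :
    (G.induce s).dist ⟨u, hw _ w.start_mem_support⟩ ⟨v, hw _ w.end_mem_support⟩ ≤
      w.length := by
  simpa [← Walk.length_map (Embedding.induce s).toHom] using dist_le (w.induce s hw)

theorem Walk.length_map_induce_eq_dist {s : Set V} {u v : s} (p : (G.induce s).Walk u v)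
    (hp : p.length = (G.induce s).dist u v) (w : G.Walk u v) (hw : w.length = G.dist u v)
    (hws : ∀ x ∈ w.support, x ∈ s) :
    (p.map (Embedding.induce s).toHom).length = G.dist u v := by
  have hG : G.dist u v ≤ p.length :=
    (dist_le (p.map (Embedding.induce s).toHom)).trans_eq (Walk.length_map _ _)
  have hR : (G.induce s).dist u v ≤ w.length := by simpa using dist_induce_le_length w hws
  rw [Walk.length_map]
  omega

end SimpleGraph

theorem stmt_4_general {V : Type*} (G : SimpleGraph V)
    (C R : Set V)
    (hCR : C ⊆ R)
    (hshort : ∀ x ∈ C, ∀ y ∈ C, ∀ p : G.Walk x y, p.IsPath →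
      p.length = G.dist x y → ∀ v ∈ p.support, v ∈ C) :
    ∀ (s t : V) (hs : s ∈ C) (ht : t ∈ R) (htC : t ∉ C)
      (p : (G.induce R).Walk ⟨s, hCR hs⟩ ⟨t, ht⟩),
      p.IsPath → p.length = (G.induce R).dist ⟨s, hCR hs⟩ ⟨t, ht⟩ →
      ∃ jstar : ℕ, 1 ≤ jstar ∧
        ∀ (j : ℕ) (hj : j < p.support.length),
          ((p.support.get ⟨j, hj⟩ : V) ∈ C ↔ j < jstar) := by
  intro s t hs ht _ p _ hp
  have hprefix : ∀ j, (p.getVert j : V) ∈ C → ∀ i ≤ j, (p.getVert i : V) ∈ C := by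
    intro j hj i hij
    set q := (p.take j).map (SimpleGraph.Embedding.induce R).toHom
    obtain ⟨w, hw⟩ := q.reachable.exists_walk_length_eq_dist
    have hwC := hshort s hs _ hj w (w.isPath_of_length_eq_dist hw) hw
    have hq : q.length = G.dist s (p.getVert j) :=
      (p.take j).length_map_induce_eq_dist (p.length_take_eq_dist hp j) w hw
        fun x hx => hCR (hwC x hx)
    apply hshort s hs _ hj q (q.isPath_of_length_eq_dist hq) hq
    have := q.getVert_mem_support i
    rwa [SimpleGraph.Walk.getVert_map, SimpleGraph.Walk.take_getVert, min_eq_right hij] at this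
  have hlower : IsLowerSet {j | j ≤ p.length ∧ (p.getVert j : V) ∈ C} :=
    fun j i hij hj => ⟨hij.trans hj.1, hprefix j hj.2 i hij⟩
  obtain ⟨jstar, hjstar⟩ := hlower.eq_univ_or_Iio.resolve_left fun h =>
    Nat.not_succ_le_self _ (Set.eq_univ_iff_forall.mp h (p.length + 1)).1
  have hmem : ∀ j ≤ p.length, ((p.getVert j : V) ∈ C ↔ j < jstar) := fun j hj => by
    rw [← Set.mem_Iio, ← hjstar]
    exact ⟨fun h => ⟨hj, h⟩, And.right⟩
  refine ⟨jstar, (hmem 0 (Nat.zero_le _)).1 (by simpa using hs), fun j hj => ?_⟩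
  have hj' : j ≤ p.length := by simpa [SimpleGraph.Walk.length_support] using hj
  simpa [SimpleGraph.Walk.getVert_eq_support_getElem p hj'] using hmem j hj'

/-- let `C` satisfy geodesic convexity with margin `γ` in `G`
(every simple path between two vertices of `C` of length at most `(1+γ)` times their
graph distance lies in `C`), in particular every shortest path in `G` between two
vertices of `C` lies in `C`.  If `C ⊆ R ⊆ V(G)`, then in the induced subgraph `G[R]`
any shortest path from `s ∈ C` to `t ∈ R \ C` is `C`-prefixed: there is an index `j*`
such that the `j`-th vertex of the path belongs to `C` iff `j < j*`. -/
theorem stmt_4 {V : Type*} [Fintype V] [DecidableEq V] (G : SimpleGraph V)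
    (C R : Set V) (γ : ℝ) (hγ0 : 0 < γ) (hγ1 : γ ≤ 1)
    (hCR : C ⊆ R)
    (hconv : ∀ x ∈ C, ∀ y ∈ C, ∀ p : G.Walk x y, p.IsPath →
      (p.length : ℝ) ≤ (1 + γ) * (G.dist x y) → ∀ v ∈ p.support, v ∈ C)
    (hshort : ∀ x ∈ C, ∀ y ∈ C, ∀ p : G.Walk x y, p.IsPath →
      p.length = G.dist x y → ∀ v ∈ p.support, v ∈ C) :
    ∀ (s t : V) (hs : s ∈ C) (ht : t ∈ R) (htC : t ∉ C)
      (p : (G.induce R).Walk ⟨s, hCR hs⟩ ⟨t, ht⟩),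
      p.IsPath → p.length = (G.induce R).dist ⟨s, hCR hs⟩ ⟨t, ht⟩ →
      ∃ jstar : ℕ, 1 ≤ jstar ∧
        ∀ (j : ℕ) (hj : j < p.support.length),
          ((p.support.get ⟨j, hj⟩ : V) ∈ C ↔ j < jstar) :=
  stmt_4_general G C R hCR hshort
end

section
/- Let G be a graph, and C_i, C_j disjoint vertex subsets each satisfying geodesic convexity with margin γ in G. Let (u_i, u_j) be an edge of G with u_i ∈ C_i, u_j ∈ C_j. Then for any vertex x with 1/γ ≤ d_G(u_i, x) < ∞: if d_G(u_i,x) ≤ d_G(u_j,x), then x ∉ C_j; and if d_G(u_i,x) ≥ d_G(u_j,x), then x ∉ C_i. -/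
/-!
Let `x ∈ C_j` with `d(u_i, x) ≤ d(u_j, x)`. A shortest path from `u_i` to `x` cannot pass
through `u_j` (that would make `d(u_j, x) < d(u_i, x)`), so prefixing it with the edge `u_j u_i`
gives a path from `u_j` to `x` of length `d(u_i, x) + 1 ≤ (1 + γ) d(u_j, x)`, the last step because
`γ d(u_j, x) ≥ γ d(u_i, x) ≥ 1`. Convexity of `C_j` then puts `u_i` into `C_j`, contradicting
disjointness. The second claim is the first with the roles of `i` and `j` exchanged.
-/

namespace SimpleGraph

variable {V : Type*} {G : SimpleGraph V}

def IsConvexWithMargin (G : SimpleGraph V) (γ : ℝ) (C : Set V) : Prop :=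
  ∀ x ∈ C, ∀ y ∈ C, ∀ p : G.Walk x y, p.IsPath →
    (p.length : ℝ) ≤ (1 + γ) * (G.dist x y) → ∀ v ∈ p.support, v ∈ C

theorem Walk.dist_lt_of_length_eq_dist {u v w : V} (p : G.Walk u v)
    (hp : p.length = G.dist u v) (hw : w ∈ p.support) (hne : w ≠ u) :
    G.dist w v < G.dist u v := by
  classical
  have hsplit : (p.takeUntil w hw).length + (p.dropUntil w hw).length = p.length := by
    rw [← Walk.length_append, p.take_spec hw]
  have htake : 0 < (p.takeUntil w hw).length :=
    Nat.pos_of_ne_zero fun h ↦ hne (Walk.eq_of_length_eq_zero h).symm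
  have hdrop : G.dist w v ≤ (p.dropUntil w hw).length := dist_le _
  omega

theorem Walk.isPath_cons_of_length_eq_dist {u v w : V} (p : G.Walk u v)
    (hp : p.length = G.dist u v) (h : G.Adj w u) (hle : G.dist u v ≤ G.dist w v) :
    (Walk.cons h p).IsPath :=
  (p.isPath_of_length_eq_dist hp).cons fun hw ↦
    (p.dist_lt_of_length_eq_dist hp hw h.ne).not_ge hle

theorem IsConvexWithMargin.notMem_of_adj {γ : ℝ} {C : Set V} (hC : G.IsConvexWithMargin γ C)
    {a b x : V} (hab : G.Adj a b) (ha : a ∉ C) (hb : b ∈ C) (hreach : G.Reachable a x)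
    (hle : G.dist a x ≤ G.dist b x) (hγ : 1 ≤ γ * G.dist b x) : x ∉ C := by
  intro hx
  obtain ⟨p, -, hp⟩ := hreach.exists_path_of_dist
  have hle' : (G.dist a x : ℝ) ≤ G.dist b x := by exact_mod_cast hle
  have hlen : ((Walk.cons hab.symm p).length : ℝ) ≤ (1 + γ) * G.dist b x := by
    rw [Walk.length_cons, hp]
    push_cast
    linarith
  exact ha <| hC b hb x hx _ (p.isPath_cons_of_length_eq_dist hp hab.symm hle) hlen a (by simp)

end SimpleGraph

theorem stmt_5_general {V : Type*} (G : SimpleGraph V)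
    (Ci Cj : Set V) (hdisj : Disjoint Ci Cj) (γ : ℝ) (hγ0 : 0 < γ)
    (hconvI : ∀ x ∈ Ci, ∀ y ∈ Ci, ∀ p : G.Walk x y, p.IsPath →
      (p.length : ℝ) ≤ (1 + γ) * (G.dist x y) → ∀ v ∈ p.support, v ∈ Ci)
    (hconvJ : ∀ x ∈ Cj, ∀ y ∈ Cj, ∀ p : G.Walk x y, p.IsPath →
      (p.length : ℝ) ≤ (1 + γ) * (G.dist x y) → ∀ v ∈ p.support, v ∈ Cj)
    (ui uj : V) (hadj : G.Adj ui uj) (hui : ui ∈ Ci) (huj : uj ∈ Cj) :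
    ∀ x : V, G.Reachable ui x → 1 / γ ≤ (G.dist ui x : ℝ) →
      ((G.dist ui x ≤ G.dist uj x → x ∉ Cj) ∧
       (G.dist uj x ≤ G.dist ui x → x ∉ Ci)) := by
  intro x hreach hd
  have hγi : 1 ≤ γ * G.dist ui x := by rwa [div_le_iff₀ hγ0, mul_comm] at hd
  constructor
  · intro hle
    have hγj : 1 ≤ γ * G.dist uj x := hγi.trans <| by gcongr
    exact SimpleGraph.IsConvexWithMargin.notMem_of_adj hconvJ hadj
      (hdisj.notMem_of_mem_left hui) huj hreach hle hγj
  · intro hle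
    exact SimpleGraph.IsConvexWithMargin.notMem_of_adj hconvI hadj.symm
      (hdisj.notMem_of_mem_right huj) hui (hadj.symm.reachable.trans hreach) hle hγi

/-- let `C_i, C_j` be disjoint vertex sets, each geodesically convex
with margin `γ` in `G`, and `(u_i, u_j)` an edge with `u_i ∈ C_i`, `u_j ∈ C_j`.
Then for any vertex `x` with `1/γ ≤ d_G(u_i, x) < ∞`:
if `d_G(u_i,x) ≤ d_G(u_j,x)` then `x ∉ C_j`, and
if `d_G(u_i,x) ≥ d_G(u_j,x)` then `x ∉ C_i`. -/
theorem stmt_5 {V : Type*} [Fintype V] [DecidableEq V] (G : SimpleGraph V)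
    (Ci Cj : Set V) (hdisj : Disjoint Ci Cj) (γ : ℝ) (hγ0 : 0 < γ) (hγ1 : γ ≤ 1)
    (hconvI : ∀ x ∈ Ci, ∀ y ∈ Ci, ∀ p : G.Walk x y, p.IsPath →
      (p.length : ℝ) ≤ (1 + γ) * (G.dist x y) → ∀ v ∈ p.support, v ∈ Ci)
    (hconvJ : ∀ x ∈ Cj, ∀ y ∈ Cj, ∀ p : G.Walk x y, p.IsPath →
      (p.length : ℝ) ≤ (1 + γ) * (G.dist x y) → ∀ v ∈ p.support, v ∈ Cj)
    (ui uj : V) (hadj : G.Adj ui uj) (hui : ui ∈ Ci) (huj : uj ∈ Cj) :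
    ∀ x : V, G.Reachable ui x → 1 / γ ≤ (G.dist ui x : ℝ) →
      ((G.dist ui x ≤ G.dist uj x → x ∉ Cj) ∧
       (G.dist uj x ≤ G.dist ui x → x ∉ Ci)) :=
  stmt_5_general G Ci Cj hdisj γ hγ0 hconvI hconvJ ui uj hadj hui huj
end

section
/- Let G be a graph and C_i a vertex subset satisfying geodesic convexity with margin γ. Let (u_i, u_j) be an edge of G with u_i ∈ C_i, u_j ∉ C_i. Suppose x, y are vertices with (x,y) an edge of G, d_G(u_i, x) ≥ 2/γ + 1, d_G(u_i, x) ≤ d_G(u_j, x) (x on the 'i-side'), and d_G(u_j, y) < d_G(u_i, y) (y on the 'j-side'). Then x ∉ C_i. -/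
/-!
Take a shortest path `p` from `u_j` to `y`. Since `y` is closer to `u_j` than to `u_i`, and `x` is
not, neither `u_i` nor `x` lies on `p`, so `u_i — u_j —p— y — x` is a path through `u_j ∉ C_i`.
Its length `d(u_j, y) + 2` is at most `d(u_i, x) + 2`, and `d(u_i, x) ≥ 2/γ + 1` makes this at
most `(1 + γ) d(u_i, x)`; margin-`γ` convexity would then force `u_j ∈ C_i` if `x ∈ C_i`.
-/

open SimpleGraph

namespace SimpleGraph

variable {V : Type*} {G : SimpleGraph V}

theorem Walk.dist_add_dist_le_length {u v w : V} (p : G.Walk u v) (hw : w ∈ p.support) :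
    G.dist u w + G.dist w v ≤ p.length := by
  classical
  calc G.dist u w + G.dist w v
      ≤ (p.takeUntil w hw).length + (p.dropUntil w hw).length :=
        add_le_add (dist_le _) (dist_le _)
    _ = p.length := by rw [← Walk.length_append, Walk.take_spec]

theorem exists_isPath_mem_support_length_le {ui uj x y : V} (hadj : G.Adj ui uj)
    (hxy : G.Adj x y) (hne : ui ≠ x) (hx_side : G.dist ui x ≤ G.dist uj x)
    (hy_side : G.dist uj y < G.dist ui y) :
    ∃ W : G.Walk ui x, W.IsPath ∧ uj ∈ W.support ∧ W.length ≤ G.dist ui x + 2 := by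
  have hreach : G.Reachable uj y :=
    hadj.symm.reachable.trans (Reachable.of_dist_ne_zero (by omega))
  obtain ⟨p, hp, hplen⟩ := hreach.exists_path_of_dist
  have hdist_xy : G.dist x y = 1 := dist_eq_one_iff_adj.mpr hxy
  have hdist_ji : G.dist uj ui = 1 := dist_eq_one_iff_adj.mpr hadj.symm
  have hiy : G.dist ui y ≤ G.dist ui x + 1 := hdist_xy ▸ hxy.reachable.dist_triangle_right ui
  have hui_notp : ui ∉ p.support := fun h ↦ by
    have := p.dist_add_dist_le_length h
    omega
  have hx_notp : x ∉ p.support := fun h ↦ by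
    have := p.dist_add_dist_le_length h
    omega
  refine ⟨.cons hadj (p.concat hxy.symm),
    (Walk.cons_isPath_iff _ _).2 ⟨hp.concat hx_notp hxy.symm, ?_⟩, by simp, ?_⟩
  · simp [Walk.support_concat, hui_notp, hne]
  · simp only [Walk.length_cons, Walk.length_concat]
    omega

end SimpleGraph

theorem stmt_6_general {V : Type*} (G : SimpleGraph V)
    (Ci : Set V) (γ : ℝ) (hγ0 : 0 < γ)
    (hconv : ∀ a ∈ Ci, ∀ b ∈ Ci, ∀ p : G.Walk a b, p.IsPath →
      (p.length : ℝ) ≤ (1 + γ) * (G.dist a b) → ∀ v ∈ p.support, v ∈ Ci)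
    (ui uj : V) (hadj : G.Adj ui uj) (hui : ui ∈ Ci) (huj : uj ∉ Ci)
    (x y : V) (hxy : G.Adj x y)
    (hfar : 2 / γ + 1 ≤ (G.dist ui x : ℝ))
    (hx_side : G.dist ui x ≤ G.dist uj x)
    (hy_side : G.dist uj y < G.dist ui y) :
    x ∉ Ci := by
  intro hx
  have hne : ui ≠ x := by
    rintro rfl
    simp only [dist_self, Nat.cast_zero] at hfar
    linarith [div_pos two_pos hγ0]
  obtain ⟨W, hW, hujW, hWlen⟩ := exists_isPath_mem_support_length_le hadj hxy hne hx_side hy_side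
  have hmargin : 2 + γ ≤ γ * G.dist ui x := by
    calc 2 + γ = γ * (2 / γ + 1) := by field_simp
      _ ≤ γ * G.dist ui x := by gcongr
  have hlen : (W.length : ℝ) ≤ (1 + γ) * G.dist ui x := by
    calc (W.length : ℝ) ≤ G.dist ui x + 2 := by exact_mod_cast hWlen
      _ ≤ (1 + γ) * G.dist ui x := by linarith
  exact huj (hconv ui hui x hx W hW hlen uj hujW)

/-- let `C_i` satisfy geodesic convexity with margin `γ` in `G`,
and `(u_i, u_j)` be an edge with `u_i ∈ C_i`, `u_j ∉ C_i`.  If `(x,y)` is an edge with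
`d_G(u_i,x) ≥ 2/γ + 1`, `d_G(u_i,x) ≤ d_G(u_j,x)` and `d_G(u_j,y) < d_G(u_i,y)`,
then `x ∉ C_i`. -/
theorem stmt_6 {V : Type*} [Fintype V] [DecidableEq V] (G : SimpleGraph V)
    (Ci : Set V) (γ : ℝ) (hγ0 : 0 < γ) (hγ1 : γ ≤ 1)
    (hconv : ∀ a ∈ Ci, ∀ b ∈ Ci, ∀ p : G.Walk a b, p.IsPath →
      (p.length : ℝ) ≤ (1 + γ) * (G.dist a b) → ∀ v ∈ p.support, v ∈ Ci)
    (ui uj : V) (hadj : G.Adj ui uj) (hui : ui ∈ Ci) (huj : uj ∉ Ci)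
    (x y : V) (hxy : G.Adj x y)
    (hreach_x : G.Reachable ui x) (hreach_y : G.Reachable uj y)
    (hfar : 2 / γ + 1 ≤ (G.dist ui x : ℝ))
    (hx_side : G.dist ui x ≤ G.dist uj x)
    (hy_side : G.dist uj y < G.dist ui y) :
    x ∉ Ci :=
  stmt_6_general G Ci γ hγ0 hconv ui uj hadj hui huj x y hxy hfar hx_side hy_side
end

section
/- Let T be a minimum spanning tree of a finite connected weighted graph G with edge weights w. For any ε > 0, let G(ε) (resp. T(ε)) be the subgraph of G (resp. T) keeping only edges of weight at most ε. Then the connected components of T(ε) coincide with the connected components of G(ε), i.e., two vertices are connected in T(ε) iff they are connected in G(ε). -/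
/-- The threshold subgraph of `G`: keep only edges of weight at most `ε`. -/
def threshGraph {V : Type*} (G : SimpleGraph V) (w : Sym2 V → ℝ) (ε : ℝ) :
    SimpleGraph V where
  Adj a b := G.Adj a b ∧ w s(a, b) ≤ ε
  symm := by
    constructor
    intro a b h
    refine ⟨h.1.symm, ?_⟩
    rw [Sym2.eq_swap]
    exact h.2
  loopless := by
    constructor
    intro a h
    exact G.irrefl h.1

/-
The cycle property of minimum spanning trees. If `ab` is an edge of `G(ε)` but `a`, `b` lie in
different components of `T(ε)`, the tree path from `a` to `b` contains an edge `f` of weight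
`> ε ≥ w(ab)`. Removing `f` separates `a` from `b`, so `T - f + ab` is again a spanning tree of
`G`, and it is strictly lighter than `T`. Hence every edge of `G(ε)` joins vertices connected in
`T(ε)`, so the two graphs have the same reachability relation.
-/

theorem mem_edgeSet_threshGraph {V : Type*} {G : SimpleGraph V} {w : Sym2 V → ℝ} {ε : ℝ}
    {e : Sym2 V} : e ∈ (threshGraph G w ε).edgeSet ↔ e ∈ G.edgeSet ∧ w e ≤ ε := by
  obtain ⟨a, b⟩ := e
  rfl

theorem threshGraph_mono {V : Type*} {G H : SimpleGraph V} (w : Sym2 V → ℝ) (ε : ℝ)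
    (h : G ≤ H) : threshGraph G w ε ≤ threshGraph H w ε :=
  fun _ _ hadj => ⟨h hadj.1, hadj.2⟩

namespace SimpleGraph

variable {V : Type*} {G H T : SimpleGraph V}

theorem Reachable.of_forall_adj_reachable (hGH : ∀ u v, G.Adj u v → H.Reachable u v)
    {u v : V} (h : G.Reachable u v) : H.Reachable u v := by
  obtain ⟨p⟩ := h
  induction p with
  | nil => rfl
  | cons hadj _ ih => exact (hGH _ _ hadj).trans ih

theorem Reachable.deleteEdges_reachable_or_reachable {x y z : V} (h : G.Reachable z x) :
    (G.deleteEdges {s(x, y)}).Reachable z x ∨ (G.deleteEdges {s(x, y)}).Reachable z y := by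
  rw [reachable_iff_reflTransGen] at h
  induction h using Relation.ReflTransGen.head_induction_on with
  | refl => exact Or.inl .rfl
  | @head z c hzc _ ih =>
    by_cases he : s(z, c) = s(x, y)
    · rcases Sym2.eq_iff.1 he with ⟨rfl, -⟩ | ⟨rfl, -⟩
      · exact Or.inl .rfl
      · exact Or.inr .rfl
    · have hadj : (G.deleteEdges {s(x, y)}).Adj z c := by simp [hzc, he]
      exact ih.imp hadj.reachable.trans hadj.reachable.trans

theorem IsAcyclic.not_reachable_deleteEdges_of_mem_edges (hT : T.IsAcyclic) {a b x y : V}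
    {p : T.Walk a b} (hp : p.IsPath) (hf : s(x, y) ∈ p.edges) :
    ¬(T.deleteEdges {s(x, y)}).Reachable a b := by
  classical
  rw [reachable_deleteEdges_iff_exists_walk]
  rintro ⟨q, hq⟩
  have hqp : q.bypass = p :=
    congrArg Subtype.val ((hT.subsingleton_path a b).elim ⟨q.bypass, q.bypass_isPath⟩ ⟨p, hp⟩)
  exact hq (q.edges_bypass_subset_edges (hqp ▸ hf))

theorem Connected.deleteEdges_sup_edge (hT : T.Connected) {a b x y : V}
    (hab : ¬(T.deleteEdges {s(x, y)}).Reachable a b) :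
    (T.deleteEdges {s(x, y)} ⊔ edge a b).Connected := by
  set Td := T.deleteEdges {s(x, y)}
  have hle : Td ≤ Td ⊔ edge a b := le_sup_left
  have side : ∀ z, Td.Reachable z x ∨ Td.Reachable z y := fun z =>
    (hT.preconnected z x).deleteEdges_reachable_or_reachable
  have hab' : (Td ⊔ edge a b).Reachable a b :=
    Adj.reachable (Or.inr ((edge_adj ..).2 ⟨Or.inl ⟨rfl, rfl⟩, fun h => hab (h ▸ .rfl)⟩))
  have hxy : (Td ⊔ edge a b).Reachable x y := by
    rcases side a with hax | hay <;> rcases side b with hbx | hby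
    · exact absurd (hax.trans hbx.symm) hab
    · exact (hax.symm.mono hle).trans (hab'.trans (hby.mono hle))
    · exact (hbx.symm.mono hle).trans (hab'.symm.trans (hay.mono hle))
    · exact absurd (hay.trans hby.symm) hab
  rw [connected_iff_exists_forall_reachable]
  refine ⟨x, fun z => ?_⟩
  rcases side z with hzx | hzy
  · exact (hzx.mono hle).symm
  · exact hxy.trans (hzy.mono hle).symm

theorem IsTree.deleteEdges_sup_edge (hT : T.IsTree) {a b x y : V}
    (hab : ¬(T.deleteEdges {s(x, y)}).Reachable a b) :
    (T.deleteEdges {s(x, y)} ⊔ edge a b).IsTree :=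
  ⟨hT.connected.deleteEdges_sup_edge hab,
    (hT.isAcyclic.anti (deleteEdges_le _)).sup_edge_of_not_reachable hab⟩

theorem sum_edgeSet_deleteEdges_sup_edge [Finite V] {M : Type*} [AddCommGroup M]
    (w : Sym2 V → M) {a b : V} {f : Sym2 V} (hne : a ≠ b) (hf : f ∈ T.edgeSet)
    (hab : s(a, b) ∉ T.edgeSet) :
    ∑ e ∈ (Set.toFinite (T.deleteEdges {f} ⊔ edge a b).edgeSet).toFinset, w e =
      ∑ e ∈ (Set.toFinite T.edgeSet).toFinset, w e - w f + w s(a, b) := by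
  classical
  have hset : (Set.toFinite (T.deleteEdges {f} ⊔ edge a b).edgeSet).toFinset =
      insert s(a, b) ((Set.toFinite T.edgeSet).toFinset.erase f) := by
    ext e
    simp [edgeSet_edge_of_ne hne, and_comm]
  rw [hset, Finset.sum_insert (by simp [hab]), Finset.sum_erase_eq_sub (by simpa using hf)]
  abel

theorem IsTree.reachable_threshGraph_of_adj [Finite V] {w : Sym2 V → ℝ} {ε : ℝ}
    (hT : T.IsTree) (hTG : T ≤ G)
    (hmin : ∀ T' : SimpleGraph V, T' ≤ G → T'.IsTree →
      ∑ e ∈ (Set.toFinite T.edgeSet).toFinset, w e ≤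
      ∑ e ∈ (Set.toFinite T'.edgeSet).toFinset, w e)
    {a b : V} (hab : G.Adj a b) (hwab : w s(a, b) ≤ ε) : (threshGraph T w ε).Reachable a b := by
  by_contra hnr
  obtain ⟨p, hp⟩ := hT.connected.exists_isPath a b
  obtain ⟨f, hfp, hwf⟩ : ∃ f ∈ p.edges, ε < w f := by
    by_contra! hle
    exact hnr ⟨p.transfer _ fun e he =>
      mem_edgeSet_threshGraph.2 ⟨p.edges_subset_edgeSet he, hle e he⟩⟩
  obtain ⟨x, y⟩ := f
  have hsep := hT.isAcyclic.not_reachable_deleteEdges_of_mem_edges hp hfp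
  have hTab : ¬T.Adj a b := fun h => hnr (Adj.reachable ⟨h, hwab⟩)
  have hle := hmin _ (sup_le ((deleteEdges_le _).trans hTG) ((edge_le_iff _).2 (Or.inr hab)))
    (hT.deleteEdges_sup_edge hsep)
  rw [sum_edgeSet_deleteEdges_sup_edge w hab.ne (p.edges_subset_edgeSet hfp) hTab] at hle
  linarith

end SimpleGraph

theorem stmt_8_general {V : Type*} [Fintype V]
    (G : SimpleGraph V) (w : Sym2 V → ℝ)
    (T : SimpleGraph V) (hTG : T ≤ G) (hTree : T.IsTree)
    (hmin : ∀ T' : SimpleGraph V, T' ≤ G → T'.IsTree →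
      ∑ e ∈ (Set.toFinite T.edgeSet).toFinset, w e ≤
      ∑ e ∈ (Set.toFinite T'.edgeSet).toFinset, w e) :
    ∀ ε : ℝ, 0 < ε → ∀ u v : V,
      (threshGraph T w ε).Reachable u v ↔ (threshGraph G w ε).Reachable u v := by
  intro ε _ u v
  refine ⟨fun h => h.mono (threshGraph_mono w ε hTG), fun h => h.of_forall_adj_reachable ?_⟩
  exact fun a b hab => hTree.reachable_threshGraph_of_adj hTG hmin hab.1 hab.2

/-- if `T` is a minimum spanning tree of a finite connected weighted
graph `G`, then for every `ε > 0` the connected components of `T(ε)` coincide with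
those of `G(ε)`: two vertices are connected in `T(ε)` iff they are connected in `G(ε)`. -/
theorem stmt_8 {V : Type*} [Fintype V] [DecidableEq V]
    (G : SimpleGraph V) (w : Sym2 V → ℝ)
    (hw : ∀ e ∈ G.edgeSet, 0 < w e)
    (hGconn : G.Connected)
    (T : SimpleGraph V) (hTG : T ≤ G) (hTree : T.IsTree)
    (hmin : ∀ T' : SimpleGraph V, T' ≤ G → T'.IsTree →
      ∑ e ∈ (Set.toFinite T.edgeSet).toFinset, w e ≤
      ∑ e ∈ (Set.toFinite T'.edgeSet).toFinset, w e) :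
    ∀ ε : ℝ, 0 < ε → ∀ u v : V,
      (threshGraph T w ε).Reachable u v ↔ (threshGraph G w ε).Reachable u v :=
  stmt_8_general G w T hTG hTree hmin
end

section
/- Let C = (C₁,...,C_k) be a (β,γ)-convex clustering of a finite semimetric space X with per-cluster radii ε₁ ≤ ... ≤ ε_k (generalized definition). Let ε* = ε₁ and let X* be the vertex set of the connected component of G_X(ε*) containing C₁. Then the induced clustering (C₁ ∩ X*, ..., C_k ∩ X*) on X* satisfies, with the single radius ε*: (1) each nonempty C_i ∩ X* induces a connected subgraph of G_{X*}(ε*); (2) for x ∈ C_i ∩ X* and y ∈ X* \ C_i, d(x,y) > βε*; (3) for x,y ∈ C_i ∩ X*, any simple path in G_{X*}(ε*) between x and y of length at most (1+γ)·d_{G_{X*}(ε*)}(x,y) lies in C_i ∩ X*. -/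
/-- The ε-neighborhood graph of a semimetric `d`. -/
def nbrGraph {V : Type*} (d : V → V → ℝ) (ε : ℝ) : SimpleGraph V where
  Adj a b := a ≠ b ∧ d a b ≤ ε ∧ d b a ≤ ε
  symm := ⟨fun _ _ h => ⟨h.1.symm, h.2.2, h.2.1⟩⟩
  loopless := ⟨fun _ h => h.1 rfl⟩

/-- The ε-neighborhood graph restricted to a ground set `S`
(this is `G_S(ε)`, viewed as a graph on the ambient vertex type). -/
def nbrGraphOn {V : Type*} (d : V → V → ℝ) (S : Set V) (ε : ℝ) : SimpleGraph V where
  Adj a b := a ≠ b ∧ a ∈ S ∧ b ∈ S ∧ d a b ≤ ε ∧ d b a ≤ ε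
  symm := ⟨fun _ _ h => ⟨h.1.symm, h.2.2.1, h.2.1, h.2.2.2.2, h.2.2.2.1⟩⟩
  loopless := ⟨fun _ h => h.1 rfl⟩

/-! `X*` is a union of connected components of `G_X(ε*)`, and `G_{X*}(ε*)` coincides with
`G_X(ε*)` on it, so walks starting in `X*` are the same in both graphs and graph distances agree.
Hence the geodesic convexity of `C_i` at radius `ε* ≤ ε_i` transfers verbatim to `C_i ∩ X*`.
Connectedness follows by applying it to shortest paths, which exist because `X*` is connected
(it is the component of the connected set `C₁`); the margin is immediate from `ε* ≤ ε_i`. -/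

namespace SimpleGraph

variable {V : Type*} {G H : SimpleGraph V} {S C : Set V} {x y : V}

def IsReachableClosed (G : SimpleGraph V) (S : Set V) : Prop :=
  ∀ ⦃a b⦄, a ∈ S → G.Reachable a b → b ∈ S

def IsGeodesicallyConvex (G : SimpleGraph V) (C : Set V) (γ : ℝ) : Prop :=
  ∀ x ∈ C, ∀ y ∈ C, G.Reachable x y → ∀ p : G.Walk x y, p.IsPath →
    (p.length : ℝ) ≤ (1 + γ) * G.dist x y → ∀ v ∈ p.support, v ∈ C

theorem isReachableClosed_setOf_reachable (A : Set V) :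
    G.IsReachableClosed {x | ∃ c ∈ A, G.Reachable c x} :=
  fun _ _ ⟨c, hc, hca⟩ hab => ⟨c, hc, hca.trans hab⟩

theorem reachable_of_mem_setOf_reachable {A : Set V} (hA : (G.induce A).Preconnected)
    (hx : x ∈ {x | ∃ c ∈ A, G.Reachable c x})
    (hy : y ∈ {x | ∃ c ∈ A, G.Reachable c x}) :
    G.Reachable x y := by
  obtain ⟨c, hc, hcx⟩ := hx
  obtain ⟨c', hc', hc'y⟩ := hy
  have hcc' : G.Reachable c c' := (hA ⟨c, hc⟩ ⟨c', hc'⟩).map (Embedding.induce A).toHom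
  exact hcx.symm.trans (hcc'.trans hc'y)

namespace IsReachableClosed

theorem support_subset (hS : G.IsReachableClosed S) (p : G.Walk x y) (hx : x ∈ S) :
    ∀ v ∈ p.support, v ∈ S := by
  intro v hv
  obtain ⟨q, -, -⟩ := Walk.mem_support_iff_exists_append.mp hv
  exact hS hx q.reachable

theorem edges_subset (hS : G.IsReachableClosed S)
    (hGH : ∀ ⦃a b⦄, a ∈ S → b ∈ S → G.Adj a b → H.Adj a b) (p : G.Walk x y)
    (hx : x ∈ S) : ∀ e ∈ p.edges, e ∈ H.edgeSet := by
  intro e he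
  induction e using Sym2.ind with
  | _ a b =>
    exact hGH (hS.support_subset p hx a (p.fst_mem_support_of_mem_edges he))
      (hS.support_subset p hx b (p.snd_mem_support_of_mem_edges he))
      (p.edges_subset_edgeSet he)

theorem reachable_of_reachable (hS : G.IsReachableClosed S)
    (hGH : ∀ ⦃a b⦄, a ∈ S → b ∈ S → G.Adj a b → H.Adj a b)
    (hx : x ∈ S) (hxy : G.Reachable x y) : H.Reachable x y :=
  let ⟨p⟩ := hxy
  (p.transfer H (hS.edges_subset hGH p hx)).reachable

theorem dist_eq (hS : G.IsReachableClosed S)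
    (hGH : ∀ ⦃a b⦄, a ∈ S → b ∈ S → G.Adj a b → H.Adj a b)
    (hHG : H ≤ G) (hx : x ∈ S) : H.dist x y = G.dist x y := by
  by_cases hxy : G.Reachable x y
  · refine le_antisymm ?_ ((hS.reachable_of_reachable hGH hx hxy).dist_anti hHG)
    obtain ⟨p, hp⟩ := hxy.exists_walk_length_eq_dist
    calc H.dist x y ≤ (p.transfer H (hS.edges_subset hGH p hx)).length := dist_le _
      _ = G.dist x y := by rw [Walk.length_transfer, hp]
  · rw [dist_eq_zero_of_not_reachable hxy,
      dist_eq_zero_of_not_reachable fun h => hxy (h.mono hHG)]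

theorem isGeodesicallyConvex_inter (hS : G.IsReachableClosed S)
    (hGH : ∀ ⦃a b⦄, a ∈ S → b ∈ S → G.Adj a b → H.Adj a b)
    (hHG : H ≤ G) {γ : ℝ} (hC : G.IsGeodesicallyConvex C γ) :
    H.IsGeodesicallyConvex (C ∩ S) γ := by
  intro x hx y hy _ p hp hlen v hv
  have hpG : ∀ e ∈ p.edges, e ∈ G.edgeSet :=
    fun e he => edgeSet_mono hHG (p.edges_subset_edgeSet he)
  set q := p.transfer G hpG
  have hvq : v ∈ q.support := by rwa [Walk.support_transfer]
  refine ⟨hC x hx.1 y hy.1 q.reachable q (hp.transfer hpG) ?_ v hvq,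
    hS.support_subset q hx.2 v hvq⟩
  rwa [Walk.length_transfer, ← hS.dist_eq hGH hHG hx.2]

end IsReachableClosed

theorem IsGeodesicallyConvex.connected_induce {γ : ℝ} (hγ : 0 ≤ γ)
    (hC : G.IsGeodesicallyConvex C γ) (hreach : ∀ x ∈ C, ∀ y ∈ C, G.Reachable x y)
    (hne : C.Nonempty) : (G.induce C).Connected := by
  rw [connected_iff]
  refine ⟨fun ⟨x, hx⟩ ⟨y, hy⟩ => ?_, hne.to_subtype⟩
  obtain ⟨p, hp, hlen⟩ := (hreach x hx y hy).exists_path_of_dist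
  have hgeod : (p.length : ℝ) ≤ (1 + γ) * G.dist x y := by
    rw [hlen]
    exact le_mul_of_one_le_left (Nat.cast_nonneg _) (by linarith)
  exact (p.induce C (hC x hx y hy p.reachable p hp hgeod)).reachable

end SimpleGraph

theorem nbrGraphOn_le {V : Type*} (d : V → V → ℝ) (S : Set V) (ε : ℝ) :
    nbrGraphOn d S ε ≤ nbrGraph d ε :=
  fun _ _ h => ⟨h.1, h.2.2.2⟩

theorem nbrGraphOn_adj_of_adj {V : Type*} {d : V → V → ℝ} {S : Set V} {ε : ℝ} {a b : V}
    (ha : a ∈ S) (hb : b ∈ S) (h : (nbrGraph d ε).Adj a b) : (nbrGraphOn d S ε).Adj a b :=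
  ⟨h.1, ha, hb, h.2⟩

theorem stmt_10_general {V : Type*} (d : V → V → ℝ)
    (k : ℕ) (hk : 0 < k) (C : Fin k → Set V)
    (β γ : ℝ) (hβ : 0 < β) (hγ : 0 < γ)
    (ε : Fin k → ℝ)
    (hmono : ∀ i j : Fin k, i ≤ j → ε i ≤ ε j)
    (hconn : ∀ i, ((nbrGraph d (ε i)).induce (C i)).Connected)
    (hmargin : ∀ i, ∀ x ∈ C i, ∀ y ∉ C i, β * ε i < d x y)
    (hconv : ∀ i, ∀ e : ℝ, e ≤ ε i → ∀ x ∈ C i, ∀ y ∈ C i,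
      (nbrGraph d e).Reachable x y →
      ∀ p : (nbrGraph d e).Walk x y, p.IsPath →
        (p.length : ℝ) ≤ (1 + γ) * ((nbrGraph d e).dist x y) →
        ∀ v ∈ p.support, v ∈ C i)
    (Xs : Set V)
    (hXs : Xs = {x : V | ∃ c ∈ C ⟨0, hk⟩, (nbrGraph d (ε ⟨0, hk⟩)).Reachable c x}) :
    (∀ i, (C i ∩ Xs).Nonempty →
        ((nbrGraphOn d Xs (ε ⟨0, hk⟩)).induce (C i ∩ Xs)).Connected) ∧
    (∀ i, ∀ x ∈ C i ∩ Xs, ∀ y ∈ Xs, y ∉ C i → β * ε ⟨0, hk⟩ < d x y) ∧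
    (∀ i, ∀ x ∈ C i ∩ Xs, ∀ y ∈ C i ∩ Xs,
      ∀ p : (nbrGraphOn d Xs (ε ⟨0, hk⟩)).Walk x y, p.IsPath →
        (p.length : ℝ) ≤ (1 + γ) * ((nbrGraphOn d Xs (ε ⟨0, hk⟩)).dist x y) →
        ∀ v ∈ p.support, v ∈ C i ∩ Xs) := by
  have hle : ∀ i, ε ⟨0, hk⟩ ≤ ε i := fun i => hmono _ i (Nat.zero_le _)
  have hXsClosed : (nbrGraph d (ε ⟨0, hk⟩)).IsReachableClosed Xs :=
    hXs ▸ SimpleGraph.isReachableClosed_setOf_reachable _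
  have hXsConvex : ∀ i, (nbrGraphOn d Xs (ε ⟨0, hk⟩)).IsGeodesicallyConvex (C i ∩ Xs) γ :=
    fun i => hXsClosed.isGeodesicallyConvex_inter (fun _ _ => nbrGraphOn_adj_of_adj)
      (nbrGraphOn_le _ _ _) (hconv i _ (hle i))
  have hXsReach : ∀ x ∈ Xs, ∀ y ∈ Xs, (nbrGraphOn d Xs (ε ⟨0, hk⟩)).Reachable x y := by
    intro x hx y hy
    refine hXsClosed.reachable_of_reachable (fun _ _ => nbrGraphOn_adj_of_adj) hx ?_
    subst hXs
    exact SimpleGraph.reachable_of_mem_setOf_reachable (hconn _).preconnected hx hy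
  refine ⟨fun i hne => (hXsConvex i).connected_induce hγ.le
      (fun x hx y hy => hXsReach x hx.2 y hy.2) hne, ?_,
    fun i x hx y hy p => hXsConvex i x hx y hy p.reachable p⟩
  intro i x hx y _ hy
  calc β * ε ⟨0, hk⟩ ≤ β * ε i := mul_le_mul_of_nonneg_left (hle i) hβ.le
    _ < d x y := hmargin i x hx.1 y hy

/-- if `(C₁,…,C_k)` is a generalized `(β,γ)`-convex clustering of `X`
with radii `ε₁ ≤ … ≤ ε_k`, `ε* = ε₁`, and `X*` is the vertex set of the connected
component of `G_X(ε*)` containing `C₁`, then the induced clustering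
`(C₁ ∩ X*, …, C_k ∩ X*)` is `(β,γ)`-convex on `X*` with the single radius `ε*`:
connectedness, local metric margin and geodesic convexity with margin all hold
in `G_{X*}(ε*)`. -/
theorem stmt_10 {V : Type*} [Fintype V] [DecidableEq V] (d : V → V → ℝ)
    (hd_symm : ∀ x y, d x y = d y x)
    (k : ℕ) (hk : 0 < k) (C : Fin k → Set V)
    (hdisj : ∀ i j, i ≠ j → Disjoint (C i) (C j))
    (hcover : ∀ x : V, ∃ i, x ∈ C i)
    (hne : ∀ i, (C i).Nonempty)
    (β γ : ℝ) (hβ : 0 < β) (hβ1 : β ≤ 1) (hγ : 0 < γ) (hγ1 : γ ≤ 1)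
    (ε : Fin k → ℝ) (hεpos : ∀ i, 0 < ε i)
    (hmono : ∀ i j : Fin k, i ≤ j → ε i ≤ ε j)
    (hconn : ∀ i, ((nbrGraph d (ε i)).induce (C i)).Connected)
    (hmargin : ∀ i, ∀ x ∈ C i, ∀ y ∉ C i, β * ε i < d x y)
    (hconv : ∀ i, ∀ e : ℝ, e ≤ ε i → ∀ x ∈ C i, ∀ y ∈ C i,
      (nbrGraph d e).Reachable x y →
      ∀ p : (nbrGraph d e).Walk x y, p.IsPath →
        (p.length : ℝ) ≤ (1 + γ) * ((nbrGraph d e).dist x y) →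
        ∀ v ∈ p.support, v ∈ C i)
    (Xs : Set V)
    (hXs : Xs = {x : V | ∃ c ∈ C ⟨0, hk⟩, (nbrGraph d (ε ⟨0, hk⟩)).Reachable c x}) :
    (∀ i, (C i ∩ Xs).Nonempty →
        ((nbrGraphOn d Xs (ε ⟨0, hk⟩)).induce (C i ∩ Xs)).Connected) ∧
    (∀ i, ∀ x ∈ C i ∩ Xs, ∀ y ∈ Xs, y ∉ C i → β * ε ⟨0, hk⟩ < d x y) ∧
    (∀ i, ∀ x ∈ C i ∩ Xs, ∀ y ∈ C i ∩ Xs,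
      ∀ p : (nbrGraphOn d Xs (ε ⟨0, hk⟩)).Walk x y, p.IsPath →
        (p.length : ℝ) ≤ (1 + γ) * ((nbrGraphOn d Xs (ε ⟨0, hk⟩)).dist x y) →
        ∀ v ∈ p.support, v ∈ C i ∩ Xs) :=
  stmt_10_general d k hk C β γ hβ hγ ε hmono hconn hmargin hconv Xs hXs
end

section
/- Consider X ⊂ ℝ consisting of n collinear points equally spaced at distance ε/2, alternately assigned to two clusters C₁ and C₂ (points at even positions in C₁, odd positions in C₂). Then with radius ε this clustering satisfies connectedness (each cluster induces a connected subgraph of G_X(ε)) and local metric margin for any β < 1/2, but violates geodesic convexity with margin γ for every γ ≥ c/n for a suitable constant c: there exist x,y ∈ C₁ and a simple path between them in G_X(ε) of length at most (1+γ)·d_{G_X(ε)}(x,y) that passes through a point of C₂. -/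
/-- `G_X(ε)` for `X = {0, ε/2, …, (n - 1)ε/2}`, the point `i ε/2` being indexed by `i : Fin n`. -/
noncomputable abbrev lineGraph (n : ℕ) (ε : ℝ) : SimpleGraph (Fin n) :=
  nbrGraph (fun i j : Fin n => |((i : ℕ) : ℝ) - ((j : ℕ) : ℝ)| * (ε / 2)) ε

theorem one_le_abs_natCast_sub_natCast {a b : ℕ} (h : a ≠ b) : (1 : ℝ) ≤ |(a : ℝ) - b| := by
  have := Int.one_le_abs (sub_ne_zero.2 (Int.natCast_inj.not.2 h))
  exact_mod_cast this

namespace lineGraph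

variable {n : ℕ} {ε : ℝ}

theorem adj_iff (hε : 0 < ε) {i j : Fin n} :
    (lineGraph n ε).Adj i j ↔ (i : ℕ) ≠ j ∧ (i : ℕ) ≤ j + 2 ∧ (j : ℕ) ≤ i + 2 := by
  have scaled (a b : ℕ) : |(a : ℝ) - b| * (ε / 2) ≤ ε ↔ a ≤ b + 2 ∧ b ≤ a + 2 := by
    have hscale : ε / (ε / 2) = 2 := by field_simp
    rw [← le_div_iff₀ (by positivity), hscale, abs_le, ← Nat.cast_le (α := ℝ),
      ← Nat.cast_le (α := ℝ)]
    push_cast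
    constructor <;> rintro ⟨h₁, h₂⟩ <;> constructor <;> linarith
  change i ≠ j ∧ _ ∧ _ ↔ _
  rw [scaled, scaled, Fin.val_injective.ne_iff]
  omega

theorem val_le_add_two_mul_length (hε : 0 < ε) {a b : Fin n} (p : (lineGraph n ε).Walk a b) :
    (b : ℕ) ≤ a + 2 * p.length := by
  induction p with
  | nil => simp
  | cons h _ ih =>
    rw [SimpleGraph.Walk.length_cons]
    have := (adj_iff hε).1 h
    omega

theorem exists_isPath_of_val_eq_add_two_mul (hε : 0 < ε) (m : ℕ) :
    ∀ {a b : Fin n}, (b : ℕ) = a + 2 * m → ∃ p : (lineGraph n ε).Walk a b,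
      p.IsPath ∧ p.length = m ∧ ∀ v ∈ p.support, (a : ℕ) ≤ v := by
  induction m with
  | zero =>
    intro a b hab
    obtain rfl : a = b := Fin.ext (by omega)
    exact ⟨.nil, by simp, rfl, by simp⟩
  | succ m ih =>
    intro a b hab
    let a' : Fin n := ⟨a + 2, by omega⟩
    obtain ⟨q, hq, hql, hqs⟩ := ih (a := a') (b := b) (by simp [a']; omega)
    have hadj : (lineGraph n ε).Adj a a' := (adj_iff hε).2 (by simp [a']; omega)
    refine ⟨.cons hadj q, hq.cons fun ha => ?_, by simp [hql], ?_⟩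
    · have : (a : ℕ) + 2 ≤ a := hqs a ha
      omega
    · simp only [SimpleGraph.Walk.support_cons, List.mem_cons, forall_eq_or_imp, le_refl, true_and]
      intro v hv
      have : (a : ℕ) + 2 ≤ v := hqs v hv
      omega

theorem dist_eq_of_val_eq_add_two_mul (hε : 0 < ε) {m : ℕ} {a b : Fin n}
    (hab : (b : ℕ) = a + 2 * m) : (lineGraph n ε).dist a b = m := by
  obtain ⟨p, -, hp, -⟩ := exists_isPath_of_val_eq_add_two_mul hε m hab
  obtain ⟨q, hq⟩ := p.reachable.exists_walk_length_eq_dist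
  have := val_le_add_two_mul_length hε q
  have := SimpleGraph.dist_le p
  omega

theorem induce_mod_two_connected (hε : 0 < ε) {r : ℕ} (hr : r < n) (hr2 : r < 2) :
    ((lineGraph n ε).induce {i : Fin n | (i : ℕ) % 2 = r}).Connected := by
  set s := {i : Fin n | (i : ℕ) % 2 = r}
  let base : s := ⟨⟨r, hr⟩, Nat.mod_eq_of_lt hr2⟩
  have reach (m : ℕ) : ∀ v : s, ((v : Fin n) : ℕ) = r + 2 * m →
      ((lineGraph n ε).induce s).Reachable base v := by
    induction m with
    | zero =>
      intro v hv
      rw [show v = base from Subtype.ext (Fin.ext hv)]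
    | succ m ih =>
      intro v hv
      let w : s := ⟨⟨r + 2 * m, by omega⟩, by simp [s]; omega⟩
      have hadj : ((lineGraph n ε).induce s).Adj w v := (adj_iff hε).2 (by simp [w]; omega)
      exact (ih w rfl).trans hadj.reachable
  rw [SimpleGraph.connected_iff_exists_forall_reachable]
  refine ⟨base, fun v => reach (((v : Fin n) : ℕ) / 2) v ?_⟩
  have hv : ((v : Fin n) : ℕ) % 2 = r := v.2
  omega

theorem exists_isPath_through_one (hε : 0 < ε) {k : ℕ} (hk : 1 ≤ k) (hkn : 2 * k < n) :
    ∃ p : (lineGraph n ε).Walk ⟨0, by omega⟩ ⟨2 * k, hkn⟩,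
      p.IsPath ∧ p.length = k + 1 ∧ ⟨1, by omega⟩ ∈ p.support := by
  obtain ⟨q, hq, hql, hqs⟩ := exists_isPath_of_val_eq_add_two_mul hε (k - 1)
    (a := ⟨2, by omega⟩) (b := ⟨2 * k, hkn⟩) (by simp; omega)
  have h01 : (lineGraph n ε).Adj ⟨0, by omega⟩ ⟨1, by omega⟩ := (adj_iff hε).2 (by simp)
  have h12 : (lineGraph n ε).Adj ⟨1, by omega⟩ ⟨2, by omega⟩ := (adj_iff hε).2 (by simp)
  refine ⟨.cons h01 (.cons h12 q), (hq.cons fun h => ?_).cons fun h => ?_, ?_, by simp⟩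
  · simpa using hqs _ h
  · simp only [SimpleGraph.Walk.support_cons, List.mem_cons, Fin.ext_iff] at h
    rcases h with h | h
    · simp at h
    · simpa using hqs _ h
  · simp only [SimpleGraph.Walk.length_cons, hql]
    omega

end lineGraph

/-- `n` collinear points spaced `ε/2` apart, alternately assigned to
`C₁` (even positions) and `C₂` (odd positions).  With radius `ε` this clustering is
connected and has local metric margin for every `β < 1/2`, but violates geodesic
convexity with margin `γ` for every `γ ≥ c/n`, for a suitable constant `c`. -/
theorem stmt_13 :
    ∃ c : ℝ, 0 < c ∧
      ∀ (n : ℕ), 4 ≤ n → ∀ ε : ℝ, 0 < ε →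
        ∀ (d : Fin n → Fin n → ℝ), (d = fun i j : Fin n => |((i : ℕ) : ℝ) - ((j : ℕ) : ℝ)| * (ε / 2)) →
        ∀ (C₁ C₂ : Set (Fin n)),
          C₁ = {i : Fin n | Even (i : ℕ)} → C₂ = {i : Fin n | Odd (i : ℕ)} →
          -- connectedness of both clusters in `G_X(ε)`
          ((nbrGraph d ε).induce C₁).Connected ∧
          ((nbrGraph d ε).induce C₂).Connected ∧
          -- local metric margin for every β < 1/2
          (∀ β : ℝ, 0 < β → β < 1 / 2 →
            ∀ x ∈ C₁, ∀ y ∈ C₂, β * ε < d x y) ∧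
          -- violation of geodesic convexity with margin γ for every γ ≥ c/n
          (∀ γ : ℝ, 0 < γ → c / (n : ℝ) ≤ γ →
            ∃ x ∈ C₁, ∃ y ∈ C₁, ∃ p : (nbrGraph d ε).Walk x y, p.IsPath ∧
              (p.length : ℝ) ≤ (1 + γ) * ((nbrGraph d ε).dist x y) ∧
              ∃ v ∈ p.support, v ∈ C₂) := by
  refine ⟨4, four_pos, fun n hn ε hε d hd C₁ C₂ hC₁ hC₂ => ?_⟩
  subst hd hC₁ hC₂
  refine ⟨?_, ?_, ?_, ?_⟩
  · have hC₁ : {i : Fin n | Even (i : ℕ)} = {i : Fin n | (i : ℕ) % 2 = 0} :=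
      Set.ext fun _ => Nat.even_iff
    rw [hC₁]
    exact lineGraph.induce_mod_two_connected hε (by omega) two_pos
  · have hC₂ : {i : Fin n | Odd (i : ℕ)} = {i : Fin n | (i : ℕ) % 2 = 1} :=
      Set.ext fun _ => Nat.odd_iff
    rw [hC₂]
    exact lineGraph.induce_mod_two_connected hε (by omega) one_lt_two
  · intro β _ hβ x hx y hy
    have hxy : (x : ℕ) ≠ y := fun h => Nat.not_even_iff_odd.2 hy (h ▸ hx)
    nlinarith [one_le_abs_natCast_sub_natCast hxy]
  · intro γ _ hγ
    set k := (n - 1) / 2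
    have hkn : 2 * k < n := by omega
    obtain ⟨p, hp, hpl, hp1⟩ := lineGraph.exists_isPath_through_one hε (k := k) (by omega) hkn
    refine ⟨_, Even.zero, ⟨2 * k, hkn⟩, even_two_mul k, p, hp, ?_, _, hp1, odd_one⟩
    rw [hpl, lineGraph.dist_eq_of_val_eq_add_two_mul hε (m := k) (by simp)]
    have hn4k : (n : ℝ) ≤ 4 * k := by exact_mod_cast (by omega : n ≤ 4 * k)
    have hγk : 1 ≤ γ * k := by
      rw [div_le_iff₀ (by positivity)] at hγ
      nlinarith
    push_cast
    linarith
end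

section
/- Nested separator cuts trace back: let R¹ ⊇ R² ⊇ ... ⊇ R^ℓ be vertex sets in a graph G and S¹, ..., S^{ℓ-1} sets such that for each t, R^{t+1} is the vertex set of a connected component of G[R^t ∩ S^t]. If (x,y) is an edge of G with exactly one endpoint in R^ℓ (say x ∈ R^ℓ, y ∉ R^ℓ), then there exists τ ∈ {1,...,ℓ-1} with x ∈ S^τ and y ∉ S^τ. -/
/-!
Walk down the chain from `Rˡ`. Since `R¹` is closed under adjacency, `y ∈ R¹`, so there is a
last index `τ` with `y ∈ R^τ`, and `y ∉ R^{τ+1}`. Then `x ∈ R^{τ+1} ⊆ S^τ`, and `y ∈ S^τ` would put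
`y ∈ R^τ ∩ S^τ` next to `x`, hence in the same component `R^{τ+1}`.
-/

open Relation

namespace SimpleGraph

variable {V : Type*} (G : SimpleGraph V)

/-- Reachability inside the induced subgraph `G[A]`. -/
abbrev ReachableWithin (A : Set V) : V → V → Prop :=
  ReflTransGen fun a b => G.Adj a b ∧ a ∈ A ∧ b ∈ A

variable {G}

theorem ReachableWithin.mem {A : Set V} {v u : V} (hv : v ∈ A) (h : G.ReachableWithin A v u) :
    u ∈ A := by
  induction h with
  | refl => exact hv
  | tail _ hab _ => exact hab.2.2

theorem mem_and_not_mem_of_adj_leaving_component {R S : Set V} {v x y : V} (hv : v ∈ R ∩ S)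
    (hxy : G.Adj x y) (hx : G.ReachableWithin (R ∩ S) v x) (hyR : y ∈ R)
    (hy : ¬G.ReachableWithin (R ∩ S) v y) : x ∈ S ∧ y ∉ S := by
  have hxRS : x ∈ R ∩ S := hx.mem hv
  exact ⟨hxRS.2, fun hyS => hy (hx.tail ⟨hxy, hxRS, hyR, hyS⟩)⟩

theorem exists_cut_of_adj_leaving {R S : ℕ → Set V} {ℓ : ℕ}
    (hR1closed : ∀ a b : V, G.Adj a b → a ∈ R 1 → b ∈ R 1)
    (hcomp : ∀ t : ℕ, 1 ≤ t → t < ℓ →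
      ∃ v ∈ R t ∩ S t, R (t + 1) = {u : V | G.ReachableWithin (R t ∩ S t) v u})
    {x y : V} (hxy : G.Adj x y) :
    ∀ t, 1 ≤ t → t ≤ ℓ → x ∈ R t → y ∉ R t → ∃ τ, 1 ≤ τ ∧ τ < t ∧ x ∈ S τ ∧ y ∉ S τ := by
  intro t ht
  induction t, ht using Nat.le_induction with
  | base => exact fun _ hx hy => absurd (hR1closed x y hxy hx) hy
  | succ t ht ih =>
    intro htℓ hx hy
    obtain ⟨v, hv, hRt⟩ := hcomp t ht (by omega)
    rw [hRt, Set.mem_ofPred_eq] at hx hy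
    by_cases hyt : y ∈ R t
    · exact ⟨t, ht, t.lt_succ_self, mem_and_not_mem_of_adj_leaving_component hv hxy hx hyt hy⟩
    · obtain ⟨τ, hτ1, hτt, hτ⟩ := ih (by omega) (hx.mem hv).1 hyt
      exact ⟨τ, hτ1, by omega, hτ⟩

end SimpleGraph

theorem stmt_17_general {V : Type*} (G : SimpleGraph V)
    (ℓ : ℕ) (hℓ : 2 ≤ ℓ) (R S : ℕ → Set V)
    (hR1closed : ∀ a b : V, G.Adj a b → a ∈ R 1 → b ∈ R 1)
    (hcomp : ∀ t : ℕ, 1 ≤ t → t < ℓ →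
      ∃ v ∈ R t ∩ S t, R (t + 1) =
        {u : V | Relation.ReflTransGen
          (fun a b => G.Adj a b ∧ a ∈ R t ∩ S t ∧ b ∈ R t ∩ S t) v u}) :
    ∀ x y : V, G.Adj x y → x ∈ R ℓ → y ∉ R ℓ →
      ∃ τ : ℕ, 1 ≤ τ ∧ τ < ℓ ∧ x ∈ S τ ∧ y ∉ S τ :=
  fun _ _ hxy => G.exists_cut_of_adj_leaving hR1closed hcomp hxy ℓ (by omega) le_rfl

/-- nested separator cuts trace back.  Let `R¹ ⊇ R² ⊇ … ⊇ Rˡ` and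
`S¹,…,S^{ℓ-1}` be such that for each `t`, `R^{t+1}` is the vertex set of a connected
component of `G[Rᵗ ∩ Sᵗ]` (and, as in the paper, `R¹` is a union of connected
components of `G`, i.e. closed under adjacency).  If `(x,y)` is an edge of `G` with
`x ∈ Rˡ` and `y ∉ Rˡ`, then there is `τ ∈ {1,…,ℓ-1}` with `x ∈ Sᵗ` and `y ∉ Sᵗ`. -/
theorem stmt_17 {V : Type*} [Fintype V] [DecidableEq V] (G : SimpleGraph V)
    (ℓ : ℕ) (hℓ : 2 ≤ ℓ) (R S : ℕ → Set V)
    (hR1closed : ∀ a b : V, G.Adj a b → a ∈ R 1 → b ∈ R 1)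
    (hcomp : ∀ t : ℕ, 1 ≤ t → t < ℓ →
      ∃ v ∈ R t ∩ S t, R (t + 1) =
        {u : V | Relation.ReflTransGen
          (fun a b => G.Adj a b ∧ a ∈ R t ∩ S t ∧ b ∈ R t ∩ S t) v u}) :
    ∀ x y : V, G.Adj x y → x ∈ R ℓ → y ∉ R ℓ →
      ∃ τ : ℕ, 1 ≤ τ ∧ τ < ℓ ∧ x ∈ S τ ∧ y ∉ S τ :=
  stmt_17_general G ℓ hℓ R S hR1closed hcomp
end
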